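/- For all t > 0, ϑ > 0 and x ∈ ℝ² ∖ {0}: ∫_{ℝ²} g_t(x−y) K₀(√(2ϑ)‖y‖) dy = e^{ϑ t} · K₀(√(2ϑ)‖x‖) − π ∫₀^t g_a(x) e^{ϑ(t−a)} da. -/

import Mathlib

/-! Substituting `a = ϑ s` in the integral defining `K₀` gives the subordination formula
`K₀(√(2ϑ)‖y‖) = π ∫₀^∞ g_s(y) e^{-ϑs} ds`. Convolving with `g_t` and exchanging the integrals
(Tonelli: everything is nonnegative), the Chapman–Kolmogorov identity `g_t ∗ g_s = g_{t+s}` turns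
the left-hand side into `π ∫₀^∞ g_{t+s}(x) e^{-ϑs} ds = π e^{ϑt} ∫_t^∞ g_u(x) e^{-ϑu} du`.
Splitting `∫_t^∞ = ∫₀^∞ - ∫₀^t` and reading `π ∫₀^∞` as `K₀` again gives the claim. The splitting
needs the Laplace integral `∫₀^∞ g_u(x) e^{-ϑu} du` to converge, which it does since
`g_u(x) ≤ (π‖x‖²)⁻¹` for all `u > 0`. -/

open MeasureTheory Real intervalIntegral

noncomputable section

/-- The plane `ℝ²`. -/
abbrev E2 := EuclideanSpace ℝ (Fin 2)

/-- The two-dimensional Gaussian heat kernel `g_t(x) = (2πt)⁻¹ exp(−‖x‖²/(2t))`. -/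
def gauss (t : ℝ) (x : E2) : ℝ := (2 * π * t)⁻¹ * Real.exp (-‖x‖ ^ 2 / (2 * t))

/-- The modified Bessel function of the second kind of order 0,
`K₀(z) = (1/2) ∫₀^∞ a⁻¹ exp(−a − z²/(4a)) da`. -/
def besselK0 (z : ℝ) : ℝ :=
  (1 / 2 : ℝ) * ∫ a in Set.Ioi (0 : ℝ), a⁻¹ * Real.exp (-a - z ^ 2 / (4 * a))

open Set

lemma integrable_rexp_neg_mul_sq_norm {V : Type*} [NormedAddCommGroup V] [InnerProductSpace ℝ V]
    [FiniteDimensional ℝ V] [MeasurableSpace V] [BorelSpace V] {b : ℝ} (hb : 0 < b) :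
    Integrable (fun v : V => Real.exp (-b * ‖v‖ ^ 2)) := by
  simpa [Complex.norm_exp, ← Complex.ofReal_pow] using
    (GaussianFourier.integrable_cexp_neg_mul_sq_norm_add (V := V) (b := b) (by simpa) 0 0).norm

lemma integral_integral_swap_of_nonneg {α β : Type*} [MeasurableSpace α] [MeasurableSpace β]
    {μ : Measure α} {ν : Measure β} [SFinite μ] [SFinite ν] {f : α → β → ℝ}
    (hf : AEStronglyMeasurable (Function.uncurry f) (μ.prod ν))
    (hf₀ : ∀ᵐ y ∂ν, ∀ x, 0 ≤ f x y) (hf_int : ∀ᵐ y ∂ν, Integrable (fun x => f x y) μ)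
    (hf_int' : Integrable (fun y => ∫ x, f x y ∂μ) ν) :
    ∫ x, ∫ y, f x y ∂ν ∂μ = ∫ y, ∫ x, f x y ∂μ ∂ν := by
  refine integral_integral_swap ((integrable_prod_iff' hf).2 ⟨hf_int, hf_int'.congr ?_⟩)
  filter_upwards [hf₀] with y hy
  simp only [Function.uncurry_apply_pair, Real.norm_of_nonneg (hy _)]

lemma setIntegral_Ioi_comp_const_add {E : Type*} [NormedAddCommGroup E] [NormedSpace ℝ E]
    (f : ℝ → E) (a b : ℝ) : ∫ s in Ioi a, f (b + s) = ∫ u in Ioi (b + a), f u := by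
  have h := (measurePreserving_add_left volume b).setIntegral_preimage_emb
    (measurableEmbedding_addLeft b) f (Ioi (b + a))
  rwa [preimage_const_add_Ioi, add_sub_cancel_left] at h

lemma integrableOn_Ioi_mul_exp_neg_of_bounded {f : ℝ → ℝ} {C ϑ : ℝ} (hϑ : 0 < ϑ)
    (hf : Measurable f) (hfC : ∀ s, 0 < s → ‖f s‖ ≤ C) :
    IntegrableOn (fun s => f s * Real.exp (-ϑ * s)) (Ioi 0) :=
  (exp_neg_integrableOn_Ioi 0 hϑ).bdd_mul hf.aestronglyMeasurable
    ((ae_restrict_iff' measurableSet_Ioi).2 (ae_of_all _ hfC))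

lemma gauss_nonneg {t : ℝ} (ht : 0 ≤ t) (x : E2) : 0 ≤ gauss t x := by
  unfold gauss; positivity

@[fun_prop]
lemma Measurable.gauss {α : Type*} [MeasurableSpace α] {f : α → ℝ} {g : α → E2}
    (hf : Measurable f) (hg : Measurable g) : Measurable (fun a => gauss (f a) (g a)) := by
  unfold _root_.gauss; fun_prop

lemma gauss_eq_mul_exp (t : ℝ) (x : E2) :
    gauss t x = (2 * π * t)⁻¹ * Real.exp (-(2 * t)⁻¹ * ‖x‖ ^ 2) := by
  rw [gauss, neg_mul, neg_div, div_eq_inv_mul]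

lemma integrable_gauss {t : ℝ} (ht : 0 < t) : Integrable (gauss t) := by
  rw [show gauss t = _ from funext (gauss_eq_mul_exp t)]
  exact (integrable_rexp_neg_mul_sq_norm (inv_pos.2 (mul_pos two_pos ht))).const_mul _

lemma integral_gauss {t : ℝ} (ht : 0 < t) : ∫ x, gauss t x = 1 := by
  simp only [gauss_eq_mul_exp, MeasureTheory.integral_const_mul,
    GaussianFourier.integral_rexp_neg_mul_sq_norm (inv_pos.2 (mul_pos two_pos ht)),
    finrank_euclideanSpace_fin]
  field_simp
  norm_num

lemma norm_sub_sq_div_add_norm_sq_div {t s : ℝ} (ht : 0 < t) (hs : 0 < s) (x y : E2) :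
    ‖x - y‖ ^ 2 / (2 * t) + ‖y‖ ^ 2 / (2 * s)
      = ‖x‖ ^ 2 / (2 * (t + s)) + ‖y - (s / (t + s)) • x‖ ^ 2 / (2 * (t * s / (t + s))) := by
  rw [norm_sub_sq_real x y, norm_sub_sq_real y, real_inner_smul_right, norm_smul,
    Real.norm_eq_abs, abs_of_pos (by positivity), real_inner_comm x y]
  field_simp
  ring

lemma gauss_sub_mul_gauss {t s : ℝ} (ht : 0 < t) (hs : 0 < s) (x y : E2) :
    gauss t (x - y) * gauss s y
      = gauss (t + s) x * gauss (t * s / (t + s)) (y - (s / (t + s)) • x) := by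
  have hexp := congrArg (fun r => Real.exp (-r)) (norm_sub_sq_div_add_norm_sq_div ht hs x y)
  simp only [neg_add, Real.exp_add, ← neg_div] at hexp
  simp only [gauss]
  rw [mul_mul_mul_comm, hexp]
  conv_rhs => rw [mul_mul_mul_comm]
  congr 1
  field_simp

lemma integrable_gauss_sub_mul_gauss {t s : ℝ} (ht : 0 < t) (hs : 0 < s) (x : E2) :
    Integrable (fun y => gauss t (x - y) * gauss s y) := by
  simp_rw [gauss_sub_mul_gauss ht hs]
  exact ((integrable_gauss (by positivity)).comp_sub_right _).const_mul _

lemma integral_gauss_sub_mul_gauss {t s : ℝ} (ht : 0 < t) (hs : 0 < s) (x : E2) :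
    ∫ y, gauss t (x - y) * gauss s y = gauss (t + s) x := by
  simp_rw [gauss_sub_mul_gauss ht hs, MeasureTheory.integral_const_mul]
  rw [integral_sub_right_eq_self (gauss _), integral_gauss (by positivity), mul_one]

lemma gauss_le_inv_two_pi_mul {t : ℝ} (ht : 0 < t) (x : E2) : gauss t x ≤ (2 * π * t)⁻¹ := by
  refine mul_le_of_le_one_right (by positivity) (Real.exp_le_one_iff.2 ?_)
  exact div_nonpos_of_nonpos_of_nonneg (by simp) (by positivity)

lemma gauss_le_inv_pi_mul_sq_norm {t : ℝ} (ht : 0 < t) {x : E2} (hx : x ≠ 0) :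
    gauss t x ≤ (π * ‖x‖ ^ 2)⁻¹ := by
  have hx' : 0 < ‖x‖ := norm_pos_iff.2 hx
  have hgauss : gauss t x
      = (π * ‖x‖ ^ 2)⁻¹ * (‖x‖ ^ 2 / (2 * t) / Real.exp (‖x‖ ^ 2 / (2 * t))) := by
    rw [gauss, neg_div, Real.exp_neg]
    field_simp
  rw [hgauss]
  refine mul_le_of_le_one_right (by positivity) ((div_le_one (Real.exp_pos _)).2 ?_)
  exact (le_add_of_nonneg_right zero_le_one).trans (Real.add_one_le_exp _)

lemma integrableOn_gauss_mul_exp_neg {ϑ : ℝ} (hϑ : 0 < ϑ) {x : E2} (hx : x ≠ 0) :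
    IntegrableOn (fun s => gauss s x * Real.exp (-ϑ * s)) (Ioi 0) :=
  integrableOn_Ioi_mul_exp_neg_of_bounded hϑ (by fun_prop) fun s hs => by
    rw [Real.norm_of_nonneg (gauss_nonneg hs.le x)]
    exact gauss_le_inv_pi_mul_sq_norm hs hx

lemma integrableOn_gauss_add_mul_exp_neg {t ϑ : ℝ} (ht : 0 < t) (hϑ : 0 < ϑ) (x : E2) :
    IntegrableOn (fun s => gauss (t + s) x * Real.exp (-ϑ * s)) (Ioi 0) :=
  integrableOn_Ioi_mul_exp_neg_of_bounded hϑ (by fun_prop) fun s (hs : 0 < s) => by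
    rw [Real.norm_of_nonneg (gauss_nonneg (by positivity) x)]
    calc gauss (t + s) x ≤ (2 * π * (t + s))⁻¹ := gauss_le_inv_two_pi_mul (by positivity) x
      _ ≤ (2 * π * t)⁻¹ := by gcongr; linarith

lemma besselK0_sqrt_mul_norm {ϑ : ℝ} (hϑ : 0 < ϑ) (y : E2) :
    besselK0 (√(2 * ϑ) * ‖y‖) = π * ∫ s in Ioi 0, gauss s y * Real.exp (-ϑ * s) := by
  have hsub := integral_comp_mul_left_Ioi
    (fun a => a⁻¹ * Real.exp (-a - (√(2 * ϑ) * ‖y‖) ^ 2 / (4 * a))) 0 hϑ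
  rw [mul_zero, smul_eq_mul, eq_inv_mul_iff_mul_eq₀ hϑ.ne'] at hsub
  rw [besselK0, ← hsub, ← mul_assoc, ← MeasureTheory.integral_const_mul,
    ← MeasureTheory.integral_const_mul]
  refine setIntegral_congr_fun measurableSet_Ioi fun s (hs : 0 < s) => ?_
  have hexp : -(ϑ * s) - 2 * ϑ * ‖y‖ ^ 2 / (4 * (ϑ * s)) = -‖y‖ ^ 2 / (2 * s) + -ϑ * s := by
    field_simp
    ring
  rw [mul_pow, sq_sqrt (by positivity), hexp, gauss, mul_assoc _ (rexp _), ← Real.exp_add]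
  field_simp

lemma integral_gauss_sub_mul_besselK0 {t ϑ : ℝ} (ht : 0 < t) (hϑ : 0 < ϑ) (x : E2) :
    ∫ y, gauss t (x - y) * besselK0 (√(2 * ϑ) * ‖y‖)
      = π * ∫ s in Ioi 0, gauss (t + s) x * Real.exp (-ϑ * s) := by
  set F : E2 → ℝ → ℝ := fun y s => π * Real.exp (-ϑ * s) * (gauss t (x - y) * gauss s y)
  have hF_int : ∀ s, 0 < s → ∫ y, F y s = π * (gauss (t + s) x * Real.exp (-ϑ * s)) :=
    fun s hs => by
      simp only [F, MeasureTheory.integral_const_mul, integral_gauss_sub_mul_gauss ht hs]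
      ring
  have hF₀ : ∀ s, 0 < s → ∀ y, 0 ≤ F y s := fun s hs y => by
    have := gauss_nonneg ht.le (x - y)
    have := gauss_nonneg hs.le y
    positivity
  have hswap : ∫ y, ∫ s in Ioi 0, F y s = ∫ s in Ioi 0, ∫ y, F y s := by
    refine integral_integral_swap_of_nonneg (by fun_prop) ?_ ?_ ?_
    · exact (ae_restrict_iff' measurableSet_Ioi).2 (ae_of_all _ hF₀)
    · exact (ae_restrict_iff' measurableSet_Ioi).2 (ae_of_all _ fun s hs =>
        (integrable_gauss_sub_mul_gauss ht hs x).const_mul _)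
    · refine ((integrableOn_gauss_add_mul_exp_neg ht hϑ x).const_mul π).congr ?_
      exact (ae_restrict_iff' measurableSet_Ioi).2 (ae_of_all _ fun s hs => (hF_int s hs).symm)
  calc ∫ y, gauss t (x - y) * besselK0 (√(2 * ϑ) * ‖y‖)
      = ∫ y, ∫ s in Ioi 0, F y s := by
        congr 1 with y
        rw [besselK0_sqrt_mul_norm hϑ, ← MeasureTheory.integral_const_mul,
          ← MeasureTheory.integral_const_mul]
        congr 1 with s
        ring
    _ = ∫ s in Ioi 0, π * (gauss (t + s) x * Real.exp (-ϑ * s)) := by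
        rw [hswap]
        exact setIntegral_congr_fun measurableSet_Ioi hF_int
    _ = π * ∫ s in Ioi 0, gauss (t + s) x * Real.exp (-ϑ * s) :=
        MeasureTheory.integral_const_mul _ _

/-- For `t, ϑ > 0` and `x ≠ 0`,
`∫ g_t(x−y) K₀(√(2ϑ)‖y‖) dy = e^{ϑt} K₀(√(2ϑ)‖x‖) − π ∫₀^t g_a(x) e^{ϑ(t−a)} da`. -/
theorem gauss_conv_besselK0_alt (t ϑ : ℝ) (ht : 0 < t) (hϑ : 0 < ϑ)
    (x : E2) (hx : x ≠ 0) :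
    (∫ y : E2, gauss t (x - y) * besselK0 (Real.sqrt (2 * ϑ) * ‖y‖))
      = Real.exp (ϑ * t) * besselK0 (Real.sqrt (2 * ϑ) * ‖x‖)
        - π * ∫ a in (0 : ℝ)..t, gauss a x * Real.exp (ϑ * (t - a)) := by
  set φ : ℝ → ℝ := fun u => gauss u x * Real.exp (-ϑ * u)
  have hshift : ∫ s in Ioi 0, gauss (t + s) x * Real.exp (-ϑ * s)
      = Real.exp (ϑ * t) * ∫ u in Ioi t, φ u := calc
    _ = ∫ s in Ioi 0, Real.exp (ϑ * t) * φ (t + s) := by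
        congr 1 with s
        rw [mul_left_comm, ← Real.exp_add]
        ring_nf
    _ = Real.exp (ϑ * t) * ∫ u in Ioi t, φ u := by
        rw [MeasureTheory.integral_const_mul, setIntegral_Ioi_comp_const_add, add_zero]
  have hfinite : ∫ a in (0 : ℝ)..t, gauss a x * Real.exp (ϑ * (t - a))
      = Real.exp (ϑ * t) * ∫ a in (0 : ℝ)..t, φ a := by
    rw [← intervalIntegral.integral_const_mul]
    congr 1 with a
    rw [mul_left_comm, ← Real.exp_add]
    ring_nf
  rw [integral_gauss_sub_mul_besselK0 ht hϑ x, hshift, hfinite, besselK0_sqrt_mul_norm hϑ x,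
    ← integral_Ioi_sub_Ioi (integrableOn_gauss_mul_exp_neg hϑ hx) ht.le]
  ring
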